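/- Let Λ₀(t, 0) be the local time at 0 of a sticky Brownian motion started at 0 with stickiness parameter ν > 0 (i.e., Λ₀(t,0) has tail probability P(Λ₀(t,0) > u) = 2 − 2Φ(u/√(t − 2νu)) for 0 < 2νu < t and 0 for 2νu ≥ t). Then E[Λ₀(t, 0)] = √(2/π) √t + ν (2 e^{t/(2ν²)}(1 − Φ(√t/ν)) − 1), and in particular E[Λ₀(t, 0)] = O(√t) as t → ∞. -/

import Mathlib

/-!
By the layer-cake formula, `E[Λ] = ∫₀^{t/(2ν)} (2 - 2Φ(u / √(t - 2νu))) du`. The integrand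
`1 - Φ(u / √(t - 2νu))` has an explicit antiderivative, found by integrating by parts: its
derivative collapses because `e^{t/(2ν²)} φ((t - νu) / (ν√(t - 2νu))) = φ(u / √(t - 2νu))`.
The antiderivative vanishes as `u ↑ t/(2ν)`, and its value at `0` is the claimed formula.
The `O(√t)` bound is Mills' ratio `1 - Φ(x) ≤ φ(x) / x` at `x = √t / ν`.
-/

open MeasureTheory Real

noncomputable def stdGaussianCDF (x : ℝ) : ℝ :=
  ∫ y in Set.Iic x, (Real.sqrt (2 * Real.pi))⁻¹ * Real.exp (-y ^ 2 / 2)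

open Filter Set Topology ProbabilityTheory

noncomputable def stdGaussianPDF (x : ℝ) : ℝ := (√(2 * π))⁻¹ * exp (-x ^ 2 / 2)

local notation "φ" => stdGaussianPDF
local notation "Φ" => stdGaussianCDF

section StdGaussian

lemma stdGaussianPDF_eq_gaussianPDFReal : φ = gaussianPDFReal 0 1 := by
  ext x
  simp [stdGaussianPDF, gaussianPDFReal]

lemma stdGaussianPDF_pos (x : ℝ) : 0 < φ x := by
  rw [stdGaussianPDF_eq_gaussianPDFReal]
  exact gaussianPDFReal_pos 0 1 x one_ne_zero

lemma integrable_stdGaussianPDF : Integrable φ := by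
  rw [stdGaussianPDF_eq_gaussianPDFReal]
  exact integrable_gaussianPDFReal 0 1

lemma integral_stdGaussianPDF : ∫ x, φ x = 1 := by
  rw [stdGaussianPDF_eq_gaussianPDFReal]
  exact integral_gaussianPDFReal_eq_one 0 one_ne_zero

lemma hasDerivAt_stdGaussianPDF (x : ℝ) : HasDerivAt φ (-x * φ x) x := by
  have h : HasDerivAt (fun y => (√(2 * π))⁻¹ * exp (-y ^ 2 / 2)) _ x :=
    (((hasDerivAt_pow 2 x).neg.div_const 2).exp).const_mul (√(2 * π))⁻¹
  exact h.congr_deriv (by simp only [stdGaussianPDF, Pi.neg_apply]; push_cast; ring)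

lemma continuous_stdGaussianPDF : Continuous φ :=
  continuous_iff_continuousAt.2 fun x => (hasDerivAt_stdGaussianPDF x).continuousAt

lemma tendsto_stdGaussianPDF_atTop : Tendsto φ atTop (𝓝 0) := by
  have hexp : Tendsto (fun x : ℝ => -x ^ 2 / 2) atTop atBot :=
    (tendsto_neg_atTop_atBot.comp (tendsto_pow_atTop two_ne_zero)).atBot_div_const two_pos
  have h := (tendsto_exp_atBot.comp hexp).const_mul (√(2 * π))⁻¹
  rw [mul_zero] at h
  exact h

lemma integrable_mul_stdGaussianPDF : Integrable fun y => y * φ y := by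
  refine ((integrable_mul_exp_neg_mul_sq (b := 1 / 2) one_half_pos).const_mul
    (√(2 * π))⁻¹).congr (Eventually.of_forall fun y => ?_)
  simp only [stdGaussianPDF]
  ring_nf

lemma integral_Ioi_mul_stdGaussianPDF (x : ℝ) : ∫ y in Ioi x, y * φ y = φ x := by
  have hderiv : ∀ y ∈ Ici x, HasDerivAt (fun z => -φ z) (y * φ y) y := fun y _ =>
    (hasDerivAt_stdGaussianPDF y).neg.congr_deriv (by ring)
  rw [integral_Ioi_of_hasDerivAt_of_tendsto' hderiv integrable_mul_stdGaussianPDF.integrableOn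
    (by simpa using tendsto_stdGaussianPDF_atTop.neg)]
  ring

lemma stdGaussianCDF_eq_integral (x : ℝ) : Φ x = ∫ y in Iic x, φ y := rfl

lemma stdGaussianCDF_nonneg (x : ℝ) : 0 ≤ Φ x :=
  setIntegral_nonneg measurableSet_Iic fun y _ => (stdGaussianPDF_pos y).le

lemma stdGaussianCDF_add_integral_Ioi (x : ℝ) : Φ x + ∫ y in Ioi x, φ y = 1 := by
  rw [stdGaussianCDF_eq_integral, ← integral_stdGaussianPDF,
    intervalIntegral.integral_Iic_add_Ioi integrable_stdGaussianPDF.integrableOn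
      integrable_stdGaussianPDF.integrableOn]

lemma one_sub_stdGaussianCDF_eq_integral (x : ℝ) : 1 - Φ x = ∫ y in Ioi x, φ y := by
  linarith [stdGaussianCDF_add_integral_Ioi x]

lemma stdGaussianCDF_le_one (x : ℝ) : Φ x ≤ 1 := by
  rw [← sub_nonneg, one_sub_stdGaussianCDF_eq_integral]
  exact setIntegral_nonneg measurableSet_Ioi fun y _ => (stdGaussianPDF_pos y).le

lemma stdGaussianCDF_zero : Φ 0 = 1 / 2 := by
  have hsymm : Φ 0 = ∫ y in Ioi 0, φ y := by
    rw [stdGaussianCDF_eq_integral, ← neg_zero, ← integral_comp_neg_Iic]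
    simp [stdGaussianPDF]
  linarith [stdGaussianCDF_add_integral_Ioi 0]

lemma hasDerivAt_stdGaussianCDF (x : ℝ) : HasDerivAt Φ (φ x) x := by
  have hΦ : ∀ y, Φ y = Φ 0 + ∫ z in (0 : ℝ)..y, φ z := fun y => by
    rw [stdGaussianCDF_eq_integral, stdGaussianCDF_eq_integral,
      intervalIntegral.integral_Iic_sub_Iic integrable_stdGaussianPDF.integrableOn
        integrable_stdGaussianPDF.integrableOn |>.symm]
    ring
  rw [funext hΦ]
  exact (intervalIntegral.integral_hasDerivAt_right integrable_stdGaussianPDF.intervalIntegrable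
    (continuous_stdGaussianPDF.stronglyMeasurableAtFilter _ _)
    continuous_stdGaussianPDF.continuousAt).const_add _

lemma continuous_stdGaussianCDF : Continuous Φ :=
  continuous_iff_continuousAt.2 fun x => (hasDerivAt_stdGaussianCDF x).continuousAt

lemma tendsto_stdGaussianCDF_atTop : Tendsto Φ atTop (𝓝 1) := by
  rw [← integral_stdGaussianPDF]
  exact (aecover_Iic tendsto_id).integral_tendsto_of_countably_generated integrable_stdGaussianPDF

lemma intervalIntegrable_stdGaussianCDF_comp {f : ℝ → ℝ} (hf : Measurable f) (a b : ℝ) :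
    IntervalIntegrable (fun u => Φ (f u)) volume a b := by
  refine intervalIntegrable_iff.2 (Measure.integrableOn_of_bounded (M := 1) measure_Ioc_lt_top.ne
    (continuous_stdGaussianCDF.measurable.comp hf).aestronglyMeasurable
    (Eventually.of_forall fun u => ?_))
  rw [norm_of_nonneg (stdGaussianCDF_nonneg _)]
  exact stdGaussianCDF_le_one _

/-- Mills' ratio: integrate `φ y ≤ (y / x) φ y` over `y > x`. -/
lemma one_sub_stdGaussianCDF_le {x : ℝ} (hx : 0 < x) : 1 - Φ x ≤ φ x / x := by
  rw [one_sub_stdGaussianCDF_eq_integral, ← integral_Ioi_mul_stdGaussianPDF, le_div_iff₀ hx,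
    ← integral_mul_const]
  exact setIntegral_mono_on (integrable_stdGaussianPDF.mul_const x).integrableOn
    integrable_mul_stdGaussianPDF.integrableOn measurableSet_Ioi fun y hy => by
      rw [mul_comm]
      exact mul_le_mul_of_nonneg_right (le_of_lt hy) (stdGaussianPDF_pos y).le

end StdGaussian

lemma integral_eq_intervalIntegral_of_tail {Ω : Type*} [MeasurableSpace Ω] (P : Measure Ω)
    {X : Ω → ℝ} (hX : Measurable X) (hX0 : ∀ ω, 0 ≤ X ω) {F : ℝ → ℝ} {T : ℝ} (hT : 0 ≤ T)
    (hF0 : ∀ u ∈ Ioo 0 T, 0 ≤ F u) (hF : IntervalIntegrable F volume 0 T)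
    (htail : ∀ u, 0 < u → P {ω | u < X ω} = if u < T then ENNReal.ofReal (F u) else 0) :
    ∫ ω, X ω ∂P = ∫ u in (0)..T, F u := by
  have hF' : IntegrableOn F (Ioo 0 T) :=
    ((intervalIntegrable_iff_integrableOn_Ioc_of_le hT).1 hF).mono_set Ioo_subset_Ioc_self
  have hlayer : ∫⁻ ω, ENNReal.ofReal (X ω) ∂P = ∫⁻ u in Ioo 0 T, ENNReal.ofReal (F u) := by
    rw [lintegral_eq_lintegral_meas_lt P (Eventually.of_forall hX0) hX.aemeasurable,
      ← Iio_inter_Ioi, ← Measure.restrict_restrict measurableSet_Iio,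
      ← lintegral_indicator measurableSet_Iio]
    exact setLIntegral_congr_fun measurableSet_Ioi fun u hu => by
      simp only [htail u hu, indicator_apply, mem_Iio]
  rw [integral_eq_lintegral_of_nonneg_ae (Eventually.of_forall hX0) hX.aestronglyMeasurable,
    hlayer,
    ← ofReal_integral_eq_lintegral_ofReal hF' (ae_restrict_of_forall_mem measurableSet_Ioo hF0),
    ENNReal.toReal_ofReal (setIntegral_nonneg measurableSet_Ioo hF0),
    intervalIntegral.integral_of_le hT, integral_Ioc_eq_integral_Ioo]

section StickyTail

variable {ν t u : ℝ}

noncomputable def stickyTailPrimitive (ν t u : ℝ) : ℝ :=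
  (u + ν) * (1 - Φ (u / √(t - 2 * ν * u))) - √(t - 2 * ν * u) * φ (u / √(t - 2 * ν * u))
    - ν * exp (t / (2 * ν ^ 2)) * (1 - Φ ((t - ν * u) / (ν * √(t - 2 * ν * u))))

/-- Since `(t - ν u)² - (ν u)² = t (t - 2 ν u)`, the two Gaussian arguments of
`stickyTailPrimitive` differ in square by `t / ν²`. -/
lemma exp_mul_stdGaussianPDF_eq (hν : ν ≠ 0) (hu : 2 * ν * u < t) :
    exp (t / (2 * ν ^ 2)) * φ ((t - ν * u) / (ν * √(t - 2 * ν * u)))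
      = φ (u / √(t - 2 * ν * u)) := by
  have hs : √(t - 2 * ν * u) ^ 2 = t - 2 * ν * u := sq_sqrt (by linarith)
  have hs0 : √(t - 2 * ν * u) ≠ 0 := (sqrt_pos.2 (by linarith)).ne'
  simp only [stdGaussianPDF]
  rw [mul_left_comm, ← exp_add]
  congr 2
  field_simp
  rw [hs]
  ring

lemma hasDerivAt_stickyTailPrimitive (hν : ν ≠ 0) (hu : 2 * ν * u < t) :
    HasDerivAt (stickyTailPrimitive ν t) (1 - Φ (u / √(t - 2 * ν * u))) u := by
  set s := √(t - 2 * ν * u) with hs_def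
  have hs0 : 0 < s := sqrt_pos.2 (by linarith)
  have hs2 : s ^ 2 = t - 2 * ν * u := sq_sqrt (by linarith)
  have hs : HasDerivAt (fun v => √(t - 2 * ν * v)) (-ν / s) u := by
    have h := ((hasDerivAt_id u).const_mul (2 * ν)).const_sub t |>.sqrt (sub_pos.2 hu).ne'
    exact h.congr_deriv (by simp only [id_eq, ← hs_def]; field_simp)
  have hg : HasDerivAt (fun v => v / √(t - 2 * ν * v)) ((t - ν * u) / s ^ 3) u := by
    have h := (hasDerivAt_id u).div hs hs0.ne'
    exact h.congr_deriv (by simp only [id_eq, ← hs_def]; field_simp; rw [hs2]; ring)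
  have hh : HasDerivAt (fun v => (t - ν * v) / (ν * √(t - 2 * ν * v))) (ν * u / s ^ 3) u := by
    have h := (((hasDerivAt_id u).const_mul ν).const_sub t).div (hs.const_mul ν) (by positivity)
    exact h.congr_deriv (by simp only [id_eq, ← hs_def]; field_simp; rw [hs2]; ring)
  have hΦg := (hasDerivAt_stdGaussianCDF _).comp u hg
  have hφg := (hasDerivAt_stdGaussianPDF _).comp u hg
  have hΦh := (hasDerivAt_stdGaussianCDF _).comp u hh
  have h := ((((hasDerivAt_id u).add_const ν).mul (hΦg.const_sub 1)).sub (hs.mul hφg)).sub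
    ((hΦh.const_sub 1).const_mul (ν * exp (t / (2 * ν ^ 2))))
  refine h.congr_deriv ?_
  have hK := exp_mul_stdGaussianPDF_eq hν hu
  rw [← hs_def] at hK
  simp only [id_eq, ← hs_def, Function.comp_apply] at hK ⊢
  rw [show ∀ a b c : ℝ, ν * a * -(b * c) = -ν * (a * b) * c by intros; ring, hK]
  field_simp
  linear_combination ν * φ (u / s) * hs2

lemma tendsto_stickyTailPrimitive_nhdsLT (hν : 0 < ν) (ht : 0 < t) :
    Tendsto (stickyTailPrimitive ν t) (𝓝[<] (t / (2 * ν))) (𝓝 0) := by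
  set T := t / (2 * ν)
  have hT : 0 < T := by positivity
  have hlt : ∀ᶠ u in 𝓝[<] T, 2 * ν * u < t := by
    filter_upwards [self_mem_nhdsWithin] with u hu using (lt_div_iff₀' (by positivity)).1 hu
  have hid : Tendsto (fun u : ℝ => u) (𝓝[<] T) (𝓝 T) :=
    tendsto_nhdsWithin_of_tendsto_nhds tendsto_id
  have hs : Tendsto (fun u => √(t - 2 * ν * u)) (𝓝[<] T) (𝓝[>] 0) := by
    refine tendsto_nhdsWithin_iff.2 ⟨?_, hlt.mono fun u hu => sqrt_pos.2 (by linarith)⟩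
    have hc : Continuous fun u => √(t - 2 * ν * u) := by fun_prop
    have h0 : 2 * ν * T = t := by simp only [T]; field_simp
    simpa [h0] using (hc.tendsto T).mono_left nhdsWithin_le_nhds
  have hg : Tendsto (fun u => u / √(t - 2 * ν * u)) (𝓝[<] T) atTop :=
    Tendsto.pos_mul_atTop hT hid (tendsto_inv_nhdsGT_zero.comp hs)
  have hh : Tendsto (fun u => (t - ν * u) / (ν * √(t - 2 * ν * u))) (𝓝[<] T) atTop := by
    have hνT : 0 < t - ν * T := by simp only [T]; field_simp; linarith
    have hνs : Tendsto (fun u => ν * √(t - 2 * ν * u)) (𝓝[<] T) (𝓝[>] 0) := by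
      refine tendsto_nhdsWithin_iff.2 ⟨?_, hlt.mono fun u hu =>
        mul_pos hν (sqrt_pos.2 (sub_pos.2 hu))⟩
      simpa using (tendsto_nhds_of_tendsto_nhdsWithin hs).const_mul ν
    exact Tendsto.pos_mul_atTop hνT (tendsto_nhdsWithin_of_tendsto_nhds
      ((by fun_prop : Continuous fun u => t - ν * u).tendsto T))
      (tendsto_inv_nhdsGT_zero.comp hνs)
  have h := ((hid.add_const ν).mul ((tendsto_stdGaussianCDF_atTop.comp hg).const_sub 1)).sub
    ((tendsto_nhds_of_tendsto_nhdsWithin hs).mul (tendsto_stdGaussianPDF_atTop.comp hg)) |>.sub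
    (((tendsto_stdGaussianCDF_atTop.comp hh).const_sub 1).const_mul (ν * exp (t / (2 * ν ^ 2))))
  simp only [sub_self, mul_zero] at h
  exact h

lemma stickyTailPrimitive_zero (hν : ν ≠ 0) (ht : 0 < t) :
    stickyTailPrimitive ν t 0
      = ν / 2 - √t / √(2 * π) - ν * exp (t / (2 * ν ^ 2)) * (1 - Φ (√t / ν)) := by
  have hst : t / (ν * √t) = √t / ν := by
    field_simp
    exact (sq_sqrt ht.le).symm
  simp only [stickyTailPrimitive, zero_add, mul_zero, sub_zero, zero_div, stdGaussianCDF_zero,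
    stdGaussianPDF, zero_pow two_ne_zero, neg_zero, exp_zero, mul_one, hst]
  ring

lemma integral_one_sub_stdGaussianCDF_sticky (hν : 0 < ν) (ht : 0 < t) :
    ∫ u in (0)..t / (2 * ν), (1 - Φ (u / √(t - 2 * ν * u)))
      = √t / √(2 * π) + ν * exp (t / (2 * ν ^ 2)) * (1 - Φ (√t / ν)) - ν / 2 := by
  have hderiv : ∀ u ∈ Ioo 0 (t / (2 * ν)), HasDerivAt (stickyTailPrimitive ν t)
      (1 - Φ (u / √(t - 2 * ν * u))) u := fun u hu =>
    hasDerivAt_stickyTailPrimitive hν.ne' ((lt_div_iff₀' (by positivity)).1 hu.2)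
  have hint : IntervalIntegrable (fun u => 1 - Φ (u / √(t - 2 * ν * u))) volume 0 (t / (2 * ν)) :=
    intervalIntegrable_const.sub (intervalIntegrable_stdGaussianCDF_comp (by fun_prop) _ _)
  have h0 :=
    (hasDerivAt_stickyTailPrimitive (u := 0) hν.ne' (by simpa using ht)).continuousAt.tendsto
  rw [intervalIntegral.integral_eq_sub_of_hasDerivAt_of_tendsto (by positivity) hderiv hint
    (h0.mono_left nhdsWithin_le_nhds) (tendsto_stickyTailPrimitive_nhdsLT hν ht),
    stickyTailPrimitive_zero hν.ne' ht]
  ring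

noncomputable def stickyLocalTimeMean (ν t : ℝ) : ℝ :=
  √(2 / π) * √t + ν * (2 * exp (t / (2 * ν ^ 2)) * (1 - Φ (√t / ν)) - 1)

lemma integral_two_sub_two_stdGaussianCDF_sticky (hν : 0 < ν) (ht : 0 < t) :
    ∫ u in (0)..t / (2 * ν), (2 - 2 * Φ (u / √(t - 2 * ν * u))) = stickyLocalTimeMean ν t := by
  have h2π : √(2 / π) = 2 / √(2 * π) := by
    rw [sqrt_div zero_le_two, sqrt_mul zero_le_two]
    field_simp
    rw [sq_sqrt zero_le_two]
  simp_rw [show ∀ u : ℝ, 2 - 2 * Φ u = 2 * (1 - Φ u) by intro; ring]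
  rw [intervalIntegral.integral_const_mul, integral_one_sub_stdGaussianCDF_sticky hν ht,
    stickyLocalTimeMean, h2π]
  ring

lemma exp_mul_one_sub_stdGaussianCDF_le {x : ℝ} (hx : 0 < x) :
    exp (x ^ 2 / 2) * (1 - Φ x) ≤ 1 / (√(2 * π) * x) := by
  calc exp (x ^ 2 / 2) * (1 - Φ x) ≤ exp (x ^ 2 / 2) * (φ x / x) :=
        mul_le_mul_of_nonneg_left (one_sub_stdGaussianCDF_le hx) (exp_pos _).le
    _ = 1 / (√(2 * π) * x) := by
        rw [stdGaussianPDF, mul_div_assoc', mul_left_comm, ← exp_add]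
        field_simp
        simp

lemma stickyLocalTimeMean_le (hν : 0 < ν) (ht : 1 ≤ t) :
    stickyLocalTimeMean ν t ≤ (1 + ν ^ 2) * √t := by
  have hst : 1 ≤ √t := one_le_sqrt.2 ht
  have hx : 0 < √t / ν := by positivity
  have hsq : (√t / ν) ^ 2 / 2 = t / (2 * ν ^ 2) := by
    rw [div_pow, sq_sqrt (by linarith)]; ring
  have h2π : 2 ≤ √(2 * π) := le_sqrt_of_sq_le (by nlinarith [pi_gt_three])
  have h2π' : √(2 / π) ≤ 1 := sqrt_le_one.2 ((div_le_one pi_pos).2 (by linarith [pi_gt_three]))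
  have htail : 2 * exp (t / (2 * ν ^ 2)) * (1 - Φ (√t / ν)) ≤ ν := by
    calc 2 * exp (t / (2 * ν ^ 2)) * (1 - Φ (√t / ν))
        ≤ 2 * (1 / (√(2 * π) * (√t / ν))) := by
          rw [mul_assoc, ← hsq]
          exact mul_le_mul_of_nonneg_left (exp_mul_one_sub_stdGaussianCDF_le hx) zero_le_two
      _ ≤ ν := by
          rw [show 2 * (1 / (√(2 * π) * (√t / ν))) = 2 / (√(2 * π) * √t) * ν by field_simp]
          exact mul_le_of_le_one_left hν.le ((div_le_one (by positivity)).2 (by nlinarith))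
  unfold stickyLocalTimeMean
  nlinarith [mul_le_mul_of_nonneg_right h2π' (sqrt_nonneg t), mul_le_mul_of_nonneg_left htail hν.le]

end StickyTail

theorem expected_sticky_local_time_general {Ω : Type*} [MeasurableSpace Ω] (P : Measure Ω)
    (ν t : ℝ) (hν : 0 < ν) (ht : 0 < t)
    (Λ : Ω → ℝ) (hmeas : Measurable Λ) (hnonneg : ∀ ω, 0 ≤ Λ ω)
    (htail : ∀ u : ℝ, 0 < u →
      P {ω | u < Λ ω} =
        if 2 * ν * u < t
          then ENNReal.ofReal (2 - 2 * stdGaussianCDF (u / Real.sqrt (t - 2 * ν * u)))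
          else 0) :
    (∫ ω, Λ ω ∂P
        = Real.sqrt (2 / Real.pi) * Real.sqrt t
          + ν * (2 * Real.exp (t / (2 * ν ^ 2))
              * (1 - stdGaussianCDF (Real.sqrt t / ν)) - 1)) ∧
    ∃ C > 0, ∀ t' : ℝ, 1 ≤ t' →
      Real.sqrt (2 / Real.pi) * Real.sqrt t'
          + ν * (2 * Real.exp (t' / (2 * ν ^ 2))
              * (1 - stdGaussianCDF (Real.sqrt t' / ν)) - 1)
        ≤ C * Real.sqrt t' := by
  have htail' : ∀ u, 0 < u → P {ω | u < Λ ω} = if u < t / (2 * ν)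
      then ENNReal.ofReal (2 - 2 * Φ (u / √(t - 2 * ν * u))) else 0 := fun u hu => by
    simp only [htail u hu, lt_div_iff₀' (by positivity : 0 < 2 * ν)]
  have hF0 : ∀ u ∈ Ioo 0 (t / (2 * ν)), 0 ≤ 2 - 2 * Φ (u / √(t - 2 * ν * u)) := fun u _ => by
    linarith [stdGaussianCDF_le_one (u / √(t - 2 * ν * u))]
  have hF : IntervalIntegrable (fun u => 2 - 2 * Φ (u / √(t - 2 * ν * u))) volume 0 (t / (2 * ν)) :=
    intervalIntegrable_const.sub
      ((intervalIntegrable_stdGaussianCDF_comp (by fun_prop) _ _).const_mul 2)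
  refine ⟨?_, 1 + ν ^ 2, by positivity, fun t' ht' => stickyLocalTimeMean_le hν ht'⟩
  rw [integral_eq_intervalIntegral_of_tail P hmeas hnonneg (by positivity) hF0 hF htail']
  exact integral_two_sub_two_stdGaussianCDF_sticky hν ht

/-- Expected local time at `0` of a sticky Brownian motion started at `0` with stickiness
parameter `ν > 0`: if `Λ ≥ 0` has tail `P(Λ > u) = 2 − 2Φ(u/√(t − 2νu))` for `0 < 2νu < t`
and `0` for `2νu ≥ t`, then `E[Λ] = √(2/π)√t + ν(2 e^{t/(2ν²)}(1 − Φ(√t/ν)) − 1)`;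
in particular this quantity is `O(√t)` as `t → ∞`. -/
theorem expected_sticky_local_time {Ω : Type*} [MeasurableSpace Ω] (P : Measure Ω)
    [IsProbabilityMeasure P] (ν t : ℝ) (hν : 0 < ν) (ht : 0 < t)
    (Λ : Ω → ℝ) (hmeas : Measurable Λ) (hnonneg : ∀ ω, 0 ≤ Λ ω)
    (htail : ∀ u : ℝ, 0 < u →
      P {ω | u < Λ ω} =
        if 2 * ν * u < t
          then ENNReal.ofReal (2 - 2 * stdGaussianCDF (u / Real.sqrt (t - 2 * ν * u)))
          else 0) :
    (∫ ω, Λ ω ∂P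
        = Real.sqrt (2 / Real.pi) * Real.sqrt t
          + ν * (2 * Real.exp (t / (2 * ν ^ 2))
              * (1 - stdGaussianCDF (Real.sqrt t / ν)) - 1)) ∧
    ∃ C > 0, ∀ t' : ℝ, 1 ≤ t' →
      Real.sqrt (2 / Real.pi) * Real.sqrt t'
          + ν * (2 * Real.exp (t' / (2 * ν ^ 2))
              * (1 - stdGaussianCDF (Real.sqrt t' / ν)) - 1)
        ≤ C * Real.sqrt t' :=
  expected_sticky_local_time_general P ν t hν ht Λ hmeas hnonneg htail
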